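/- For any two points α = (f, a) and β = (g, b) of C with separation moment c = c(α,β), the map F : [0, L] → C with L = (a − c) + (b − c), given by F(t) = (f restricted to [0, a − t], a − t) for 0 ≤ t ≤ a − c, and F(t) = (g restricted to [0, b − (L − t)], b − (L − t)) for a − c ≤ t ≤ L, is an isometric embedding of the interval [0, L] into (C, d_C) with F(0) = α and F(L) = β. In particular, (C, d_C) is a geodesic metric space. -/
import Mathlib


/-- A point of the space `C`: a pair `(f, a)` with `a ≥ 0` and `f` continuous on
`[0, a]` with `f 0 = 0` (represented by a total function on `ℝ`). -/
structure PtC where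
  a : ℝ
  ha : 0 ≤ a
  f : ℝ → ℝ
  hcont : ContinuousOn f (Set.Icc 0 a)
  hf0 : f 0 = 0

/-- The moment of separation `c(α, β)`. -/
noncomputable def sep (α β : PtC) : ℝ :=
  sSup {s : ℝ | 0 ≤ s ∧ s ≤ min α.a β.a ∧ ∀ x ∈ Set.Icc (0:ℝ) s, α.f x = β.f x}

/-- The distance `d_C(α, β) = (a − c) + (b − c)`. -/
noncomputable def dC (α β : PtC) : ℝ := (α.a - sep α β) + (β.a - sep α β)

open Topology Filter

/-- The set whose supremum is `sep`. -/
def sepSet (α β : PtC) : Set ℝ :=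
  {s : ℝ | 0 ≤ s ∧ s ≤ min α.a β.a ∧ ∀ x ∈ Set.Icc (0:ℝ) s, α.f x = β.f x}

lemma zero_mem_sepSet (α β : PtC) : (0:ℝ) ∈ sepSet α β := by
  refine ⟨le_rfl, le_min α.ha β.ha, fun x hx => ?_⟩
  have hx0 : x = 0 := le_antisymm hx.2 hx.1
  rw [hx0, α.hf0, β.hf0]

lemma sepSet_nonempty (α β : PtC) : (sepSet α β).Nonempty := ⟨0, zero_mem_sepSet α β⟩

lemma sepSet_bddAbove (α β : PtC) : BddAbove (sepSet α β) :=
  ⟨min α.a β.a, fun _ hs => hs.2.1⟩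

lemma sep_nonneg (α β : PtC) : 0 ≤ sep α β :=
  le_csSup (sepSet_bddAbove α β) (zero_mem_sepSet α β)

lemma sep_le_min (α β : PtC) : sep α β ≤ min α.a β.a :=
  csSup_le (sepSet_nonempty α β) (fun _ hs => hs.2.1)

lemma sep_comm (α β : PtC) : sep α β = sep β α := by
  unfold sep
  congr 1
  ext s
  simp only [Set.mem_setOf_eq]
  constructor <;> rintro ⟨h1, h2, h3⟩ <;>
    exact ⟨h1, by rwa [min_comm], fun x hx => (h3 x hx).symm⟩

lemma sep_eqOn (α β : PtC) : ∀ x ∈ Set.Icc (0:ℝ) (sep α β), α.f x = β.f x := by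
  have hlt : ∀ x, 0 ≤ x → x < sep α β → α.f x = β.f x := by
    intro x hx0 hx
    obtain ⟨s, hs, hxs⟩ := exists_lt_of_lt_csSup (sepSet_nonempty α β) hx
    exact hs.2.2 x ⟨hx0, hxs.le⟩
  rintro x ⟨hx0, hx1⟩
  rcases lt_or_eq_of_le hx1 with h | h
  · exact hlt x hx0 h
  subst h
  rcases eq_or_lt_of_le (sep_nonneg α β) with h0 | h0
  · rw [← h0, α.hf0, β.hf0]
  · have hca : sep α β ≤ α.a := (sep_le_min α β).trans (min_le_left _ _)
    have hcb : sep α β ≤ β.a := (sep_le_min α β).trans (min_le_right _ _)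
    have hne : (𝓝[Set.Ioo (0:ℝ) (sep α β)] (sep α β)).NeBot := by
      rw [← mem_closure_iff_nhdsWithin_neBot, closure_Ioo (ne_of_lt h0)]
      exact ⟨sep_nonneg α β, le_rfl⟩
    have hf : Filter.Tendsto α.f (𝓝[Set.Ioo (0:ℝ) (sep α β)] (sep α β)) (𝓝 (α.f (sep α β))) :=
      (α.hcont (sep α β) ⟨sep_nonneg α β, hca⟩).mono
        (fun y hy => ⟨hy.1.le, hy.2.le.trans hca⟩)
    have hg : Filter.Tendsto β.f (𝓝[Set.Ioo (0:ℝ) (sep α β)] (sep α β)) (𝓝 (β.f (sep α β))) :=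
      (β.hcont (sep α β) ⟨sep_nonneg α β, hcb⟩).mono
        (fun y hy => ⟨hy.1.le, hy.2.le.trans hcb⟩)
    have heq : ∀ᶠ y in 𝓝[Set.Ioo (0:ℝ) (sep α β)] (sep α β), α.f y = β.f y :=
      eventually_mem_nhdsWithin.mono (fun y hy => hlt y hy.1.le hy.2)
    exact tendsto_nhds_unique (hf.congr' heq) hg

lemma sep_eq_min (γ δ : PtC)
    (h : ∀ x ∈ Set.Icc (0:ℝ) (min γ.a δ.a), γ.f x = δ.f x) :
    sep γ δ = min γ.a δ.a := by
  refine le_antisymm (sep_le_min γ δ) (le_csSup (sepSet_bddAbove γ δ) ?_)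
  exact ⟨le_min γ.ha δ.ha, le_rfl, h⟩

lemma sep_cross (α β γ δ : PtC) (hγf : γ.f = α.f) (hδf : δ.f = β.f)
    (hγ1 : sep α β ≤ γ.a) (hγ2 : γ.a ≤ α.a)
    (hδ1 : sep α β ≤ δ.a) (hδ2 : δ.a ≤ β.a) :
    sep γ δ = sep α β := by
  refine le_antisymm (csSup_le (sepSet_nonempty γ δ) ?_)
    (le_csSup (sepSet_bddAbove γ δ) ?_)
  · intro s hs
    refine le_csSup (sepSet_bddAbove α β)
      ⟨hs.1, le_min ((le_min_iff.1 hs.2.1).1.trans hγ2)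
        ((le_min_iff.1 hs.2.1).2.trans hδ2), fun x hx => ?_⟩
    have := hs.2.2 x hx
    rwa [hγf, hδf] at this
  · refine ⟨sep_nonneg α β, le_min hγ1 hδ1, fun x hx => ?_⟩
    rw [hγf, hδf]
    exact sep_eqOn α β x hx

/-- The geodesic path. -/
noncomputable def pathF (α β : PtC) (t : ℝ) : PtC :=
  if t ≤ α.a - sep α β then
    { a := min α.a (max (sep α β) (α.a - t))
      ha := le_min α.ha ((sep_nonneg α β).trans (le_max_left _ _))
      f := α.f
      hcont := α.hcont.mono (Set.Icc_subset_Icc le_rfl (min_le_left _ _))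
      hf0 := α.hf0 }
  else
    { a := min β.a (max (sep α β) (β.a - ((α.a - sep α β) + (β.a - sep α β) - t)))
      ha := le_min β.ha ((sep_nonneg α β).trans (le_max_left _ _))
      f := β.f
      hcont := β.hcont.mono (Set.Icc_subset_Icc le_rfl (min_le_left _ _))
      hf0 := β.hf0 }

lemma pathF_left (α β : PtC) (t : ℝ) (h0 : 0 ≤ t) (h : t ≤ α.a - sep α β) :
    (pathF α β t).a = α.a - t ∧ (pathF α β t).f = α.f := by
  have hc0 := sep_nonneg α β
  constructor
  · simp only [pathF, if_pos h]
    rw [max_eq_right (by linarith), min_eq_right (by linarith)]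
  · simp only [pathF, if_pos h]

lemma pathF_right (α β : PtC) (t : ℝ) (h : ¬ t ≤ α.a - sep α β)
    (hL : t ≤ (α.a - sep α β) + (β.a - sep α β)) :
    (pathF α β t).a = β.a - ((α.a - sep α β) + (β.a - sep α β) - t) ∧
      (pathF α β t).f = β.f := by
  push_neg at h
  constructor
  · simp only [pathF, if_neg (not_le.2 h)]
    rw [max_eq_right (by linarith), min_eq_right (by linarith)]
  · simp only [pathF, if_neg (not_le.2 h)]

/-- the canonical path from `α` down to the common restriction and up to `β`
is an isometric embedding of `[0, L]` into `(C, d_C)`, with endpoints `α` and `β`.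
In particular `(C, d_C)` is geodesic. -/
theorem dC_geodesic (α β : PtC) :
    ∃ F : ℝ → PtC,
      (∀ t, 0 ≤ t → t ≤ α.a - sep α β →
        (F t).a = α.a - t ∧ Set.EqOn (F t).f α.f (Set.Icc 0 (α.a - t))) ∧
      (∀ t, α.a - sep α β ≤ t → t ≤ (α.a - sep α β) + (β.a - sep α β) →
        (F t).a = β.a - ((α.a - sep α β) + (β.a - sep α β) - t) ∧
        Set.EqOn (F t).f β.f (Set.Icc 0 (β.a - ((α.a - sep α β) + (β.a - sep α β) - t)))) ∧
      (∀ s ∈ Set.Icc (0:ℝ) ((α.a - sep α β) + (β.a - sep α β)),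
       ∀ t ∈ Set.Icc (0:ℝ) ((α.a - sep α β) + (β.a - sep α β)),
        dC (F s) (F t) = |s - t|) ∧
      dC (F 0) α = 0 ∧ dC (F ((α.a - sep α β) + (β.a - sep α β))) β = 0 := by
  have hc0 : 0 ≤ sep α β := sep_nonneg α β
  have hca : sep α β ≤ α.a := (sep_le_min α β).trans (min_le_left _ _)
  have hcb : sep α β ≤ β.a := (sep_le_min α β).trans (min_le_right _ _)
  refine ⟨pathF α β, ?_, ?_, ?_, ?_, ?_⟩
  · intro t h0 h1
    obtain ⟨ha', hf'⟩ := pathF_left α β t h0 h1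
    exact ⟨ha', fun x _ => by rw [hf']⟩
  · intro t h1 h2
    by_cases ht : t ≤ α.a - sep α β
    · have hteq : t = α.a - sep α β := le_antisymm ht h1
      obtain ⟨ha', hf'⟩ := pathF_left α β t (by linarith) ht
      have hbt : β.a - ((α.a - sep α β) + (β.a - sep α β) - t) = sep α β := by
        rw [hteq]; ring
      refine ⟨by rw [ha', hbt, hteq]; ring, ?_⟩
      rw [hbt]
      intro x hx
      rw [hf']
      exact sep_eqOn α β x hx
    · obtain ⟨ha', hf'⟩ := pathF_right α β t ht h2
      exact ⟨ha', fun x _ => by rw [hf']⟩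
  · rintro s ⟨hs0, hs1⟩ t ⟨ht0, ht1⟩
    by_cases hs : s ≤ α.a - sep α β <;> by_cases ht : t ≤ α.a - sep α β
    · obtain ⟨hsa, hsf⟩ := pathF_left α β s hs0 hs
      obtain ⟨hta, htf⟩ := pathF_left α β t ht0 ht
      have hsep : sep (pathF α β s) (pathF α β t)
          = min (pathF α β s).a (pathF α β t).a :=
        sep_eq_min _ _ (fun x _ => by rw [hsf, htf])
      rw [dC, hsep, hsa, hta]
      rcases le_total s t with h | h
      · rw [min_eq_right (by linarith), abs_of_nonpos (by linarith)]; ring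
      · rw [min_eq_left (by linarith), abs_of_nonneg (by linarith)]; ring
    · obtain ⟨hsa, hsf⟩ := pathF_left α β s hs0 hs
      obtain ⟨hta, htf⟩ := pathF_right α β t ht ht1
      push_neg at ht
      have hsep : sep (pathF α β s) (pathF α β t) = sep α β :=
        sep_cross α β _ _ hsf htf (by rw [hsa]; linarith) (by rw [hsa]; linarith)
          (by rw [hta]; linarith) (by rw [hta]; linarith)
      rw [dC, hsep, hsa, hta, abs_of_nonpos (by linarith)]
      ring
    · obtain ⟨hsa, hsf⟩ := pathF_right α β s hs hs1
      obtain ⟨hta, htf⟩ := pathF_left α β t ht0 ht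
      push_neg at hs
      have hsep : sep (pathF α β s) (pathF α β t) = sep α β := by
        rw [sep_comm]
        exact sep_cross α β _ _ htf hsf (by rw [hta]; linarith) (by rw [hta]; linarith)
          (by rw [hsa]; linarith) (by rw [hsa]; linarith)
      rw [dC, hsep, hsa, hta, abs_of_nonneg (by linarith)]
      ring
    · obtain ⟨hsa, hsf⟩ := pathF_right α β s hs hs1
      obtain ⟨hta, htf⟩ := pathF_right α β t ht ht1
      push_neg at hs ht
      have hsep : sep (pathF α β s) (pathF α β t)
          = min (pathF α β s).a (pathF α β t).a :=
        sep_eq_min _ _ (fun x _ => by rw [hsf, htf])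
      rw [dC, hsep, hsa, hta]
      rcases le_total s t with h | h
      · rw [min_eq_left (by linarith), abs_of_nonpos (by linarith)]; ring
      · rw [min_eq_right (by linarith), abs_of_nonneg (by linarith)]; ring
  · obtain ⟨ha', hf'⟩ := pathF_left α β 0 le_rfl (by linarith)
    have hsep : sep (pathF α β 0) α = min (pathF α β 0).a α.a :=
      sep_eq_min _ _ (fun x _ => by rw [hf'])
    rw [dC, hsep, ha', sub_zero, min_self]; ring
  · by_cases hb : (α.a - sep α β) + (β.a - sep α β) ≤ α.a - sep α β
    · have hbc : β.a = sep α β := le_antisymm (by linarith) hcb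
      obtain ⟨ha', hf'⟩ := pathF_left α β _ (by linarith) hb
      have haL : (pathF α β ((α.a - sep α β) + (β.a - sep α β))).a = β.a := by
        rw [ha', hbc]; ring
      have hsep : sep (pathF α β ((α.a - sep α β) + (β.a - sep α β))) β
          = min (pathF α β ((α.a - sep α β) + (β.a - sep α β))).a β.a := by
        refine sep_eq_min _ _ (fun x hx => ?_)
        rw [hf']
        refine sep_eqOn α β x ⟨hx.1, ?_⟩
        rw [haL, min_self, hbc] at hx
        exact hx.2
      rw [dC, hsep, haL, min_self]; ring
    · obtain ⟨ha', hf'⟩ := pathF_right α β _ hb le_rfl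
      have haL : (pathF α β ((α.a - sep α β) + (β.a - sep α β))).a = β.a := by
        rw [ha']; ring
      have hsep : sep (pathF α β ((α.a - sep α β) + (β.a - sep α β))) β
          = min (pathF α β ((α.a - sep α β) + (β.a - sep α β))).a β.a :=
        sep_eq_min _ _ (fun x _ => by rw [hf'])
      rw [dC, hsep, haL, min_self]; ring
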